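/- Let A be an associative unital ℂ-algebra, m, k ∈ ℂ, and a, b, c, d, f ∈ A. Then the RTT-relation R(G_{m,k}) * T₁ * T₂ = T₂ * T₁ * R(G_{m,k}) holds (as an equality of matrices over A indexed by (Fin 3 × Fin 3)) if and only if the following relations hold, where δ = a·d − b·c + m·a·c: cd − dc = −m·c², cb − bc = −m·(ac + cd), ca − ac = −m·c², da − ad = −m·(d − a)·c, db − bd = −m·(d² − δ), ba − ab = −m·(δ − a²), fa − af = k·c·f, fb − bf = k·(d·f − f·a), fc = cf, fd − df = −k·c·f. -/

import Mathlib

noncomputable section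

open Matrix

/-- The Jordanian `R`-matrix `R(G_{m,k})`, indexed by `Fin 3 × Fin 3`
(indices `0,1,2` correspond to the paper's `1,2,3`). -/
def Rgmk (m k : ℂ) : Matrix (Fin 3 × Fin 3) (Fin 3 × Fin 3) ℂ :=
  fun p q =>
    if p = q then 1
    else if p = (0, 0) ∧ q = (0, 1) then -m
    else if p = (0, 0) ∧ q = (1, 0) then m
    else if p = (0, 0) ∧ q = (1, 1) then m ^ 2
    else if p = (0, 1) ∧ q = (1, 1) then -m
    else if p = (1, 0) ∧ q = (1, 1) then m
    else if p = (0, 2) ∧ q = (1, 2) then k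
    else if p = (2, 0) ∧ q = (2, 1) then -k
    else 0

/-- The matrix of generators `T` of `G_{m,k}`. -/
def Tmat {A : Type*} [Ring A] (a b c d f : A) : Matrix (Fin 3) (Fin 3) A :=
  !![a, b, 0; c, d, 0; 0, 0, f]

/-- `T₁ = T ⊗ 1`. -/
def T1 {A : Type*} [Ring A] (T : Matrix (Fin 3) (Fin 3) A) :
    Matrix (Fin 3 × Fin 3) (Fin 3 × Fin 3) A :=
  fun p q => if p.2 = q.2 then T p.1 q.1 else 0

/-- `T₂ = 1 ⊗ T`. -/
def T2 {A : Type*} [Ring A] (T : Matrix (Fin 3) (Fin 3) A) :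
    Matrix (Fin 3 × Fin 3) (Fin 3 × Fin 3) A :=
  fun p q => if p.1 = q.1 then T p.2 q.2 else 0

/-!
Since `T1 T * T2 T` and `T2 T * T1 T` have entries `T i k * T j l` and `T j l * T i k`, the
RTT relation is a system of 81 identities in `A`. Because `R(G_{m,k})` is unitriangular and
sparse, and `T` is block diagonal, all but 23 of them are trivial; ten of those 23 are the listed
relations, and the remaining ones are `ℂ`-linear combinations of them.
-/

section RTT

variable {K A : Type*} [CommSemiring K] [Ring A] [Algebra K A]

theorem T1_mul_T2 (T : Matrix (Fin 3) (Fin 3) A) : T1 T * T2 T = of fun p q => T p.1 q.1 * T p.2 q.2 := by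
  ext ⟨i, j⟩ ⟨k, l⟩
  simp [mul_apply, Fintype.sum_prod_type, T1, T2]

theorem T2_mul_T1 (T : Matrix (Fin 3) (Fin 3) A) : T2 T * T1 T = of fun p q => T p.2 q.2 * T p.1 q.1 := by
  ext ⟨i, j⟩ ⟨k, l⟩
  simp [mul_apply, Fintype.sum_prod_type, T1, T2]

def SatisfiesRTT (R : Matrix (Fin 3 × Fin 3) (Fin 3 × Fin 3) K) (T : Matrix (Fin 3) (Fin 3) A) :
    Prop :=
  R.map (algebraMap K A) * T1 T * T2 T = T2 T * T1 T * R.map (algebraMap K A)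

theorem satisfiesRTT_iff (R : Matrix (Fin 3 × Fin 3) (Fin 3 × Fin 3) K)
    (T : Matrix (Fin 3) (Fin 3) A) :
    SatisfiesRTT R T ↔
      ∀ p q, ∑ r, R p r • (T r.1 q.1 * T r.2 q.2) = ∑ r, R r q • (T p.2 r.2 * T p.1 r.1) := by
  rw [SatisfiesRTT, Matrix.mul_assoc (R.map _), T1_mul_T2, T2_mul_T1, ← Matrix.ext_iff]
  simp only [mul_apply, of_apply, map_apply, Algebra.smul_def, Algebra.commutes]

end RTT

section Gmk

variable {A : Type*} [Ring A] [Algebra ℂ A] (m k : ℂ) (a b c d f : A)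

def GmkRelations : Prop :=
  c * d - d * c = (-m) • (c * c) ∧
  c * b - b * c = (-m) • (a * c + c * d) ∧
  c * a - a * c = (-m) • (c * c) ∧
  d * a - a * d = (-m) • ((d - a) * c) ∧
  d * b - b * d = (-m) • (d * d - (a * d - b * c + m • (a * c))) ∧
  b * a - a * b = (-m) • ((a * d - b * c + m • (a * c)) - a * a) ∧
  f * a - a * f = k • (c * f) ∧
  f * b - b * f = k • (d * f - f * a) ∧
  f * c = c * f ∧
  f * d - d * f = (-k) • (c * f)

theorem gmkRelations_of_satisfiesRTT (h : SatisfiesRTT (Rgmk m k) (Tmat a b c d f)) :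
    GmkRelations m k a b c d f := by
  have entry := (satisfiesRTT_iff _ _).1 h
  have hcd := entry (1, 1) (0, 1)
  have hcb := entry (1, 0) (0, 1)
  have hca := entry (1, 0) (0, 0)
  have hda := entry (1, 0) (1, 0)
  have hdb := entry (1, 0) (1, 1)
  have hba := entry (0, 0) (1, 0)
  have hfa := entry (0, 2) (0, 2)
  have hfb := entry (0, 2) (1, 2)
  have hfc := entry (1, 2) (0, 2)
  have hfd := entry (2, 1) (2, 1)
  simp [Rgmk, Tmat, Fintype.sum_prod_type, Fin.sum_univ_three]
    at hcd hcb hca hda hdb hba hfa hfb hfc hfd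
  have hda' : d * a - a * d = (-m) • (d * c - a * c) := by
    linear_combination (norm := module) hda
  refine ⟨?_, ?_, ?_, by rwa [sub_mul], ?_, ?_, ?_, ?_, ?_, ?_⟩
  · linear_combination (norm := module) hcd
  · linear_combination (norm := module) hcb
  · linear_combination (norm := module) hca
  · linear_combination (norm := module) hdb
  · linear_combination (norm := module) hba - m • hda'
  · linear_combination (norm := module) -hfa
  · linear_combination (norm := module) -hfb
  · linear_combination (norm := module) -hfc
  · linear_combination (norm := module) hfd

theorem satisfiesRTT_of_gmkRelations (h : GmkRelations m k a b c d f) :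
    SatisfiesRTT (Rgmk m k) (Tmat a b c d f) := by
  obtain ⟨hcd, hcb, hca, hda, hdb, hba, hfa, hfb, hfc, hfd⟩ := h
  rw [sub_mul] at hda
  refine (satisfiesRTT_iff _ _).2 fun ⟨i, j⟩ ⟨p, q⟩ => ?_
  fin_cases i <;> fin_cases j <;> fin_cases p <;> fin_cases q <;>
    simp [Rgmk, Tmat, Fintype.sum_prod_type, Fin.sum_univ_three]
  -- the 23 entries left by `simp`, in lexicographic order of `((i, j), (p, q))`
  · linear_combination (norm := module) m • hca
  · linear_combination (norm := module) m • hcb - hba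
  · linear_combination (norm := module) hba + m • hda
  · linear_combination (norm := module) m • hdb + m • hba
  · linear_combination (norm := module) -hca
  · linear_combination (norm := module) -hda - m • hcd + m • hca
  · linear_combination (norm := module) -hcb + m • hcd - m • hca
  · linear_combination (norm := module) -hdb + m • hda - m • hcb + (m ^ 2) • hcd - (m ^ 2) • hca
  · linear_combination (norm := module) -hfa
  · linear_combination (norm := module) -hfb
  · linear_combination (norm := module) hca
  · linear_combination (norm := module) hcb
  · linear_combination (norm := module) hda
  · linear_combination (norm := module) hdb
  · linear_combination (norm := module) hcd
  · linear_combination (norm := module) -hcd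
  · linear_combination (norm := module) (-m) • hcd
  · linear_combination (norm := module) -hfc
  · linear_combination (norm := module) -hfd - k • hfc
  · linear_combination (norm := module) hfa - k • hfc
  · linear_combination (norm := module) hfb - k • hfd - k • hfa
  · linear_combination (norm := module) hfc
  · linear_combination (norm := module) hfd

end Gmk

/-- the `RTT`-relations for `R(G_{m,k})` hold iff the generators satisfy
the defining commutation relations of the Jordanian quantum group `G_{m,k}`. -/
theorem Gmk_RTT_iff_relations (A : Type*) [Ring A] [Algebra ℂ A]
    (m k : ℂ) (a b c d f : A) :
    ((Rgmk m k).map (algebraMap ℂ A) * T1 (Tmat a b c d f) * T2 (Tmat a b c d f) =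
        T2 (Tmat a b c d f) * T1 (Tmat a b c d f) * (Rgmk m k).map (algebraMap ℂ A)) ↔
      (c * d - d * c = (-m) • (c * c) ∧
       c * b - b * c = (-m) • (a * c + c * d) ∧
       c * a - a * c = (-m) • (c * c) ∧
       d * a - a * d = (-m) • ((d - a) * c) ∧
       d * b - b * d = (-m) • (d * d - (a * d - b * c + m • (a * c))) ∧
       b * a - a * b = (-m) • ((a * d - b * c + m • (a * c)) - a * a) ∧
       f * a - a * f = k • (c * f) ∧
       f * b - b * f = k • (d * f - f * a) ∧
       f * c = c * f ∧
       f * d - d * f = (-k) • (c * f)) :=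
  ⟨gmkRelations_of_satisfiesRTT m k a b c d f, satisfiesRTT_of_gmkRelations m k a b c d f⟩
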